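/- Let (X,·,d) be a group which is complete and metric invariant, with identity element e. Then (Lip¹₊(X), ⊕), the set of nonnegative 1-Lipschitz real functions with the inf-convolution, is a monoid with identity element γ(e) = d(e,·), and a function f ∈ Lip¹₊(X) is invertible in this monoid (i.e. there exists g ∈ Lip¹₊(X) with f ⊕ g = g ⊕ f = γ(e)) if and only if f = d(a,·) for some a ∈ X. -/

import Mathlib

/-!
Bi-invariance of `d` gives `d(a,·) ⊕ d(b,·) = d(ab,·)`, so `d(a⁻¹,·)` inverts `d(a,·)`.
Conversely, if `f ⊕ g = g ⊕ f = d(1,·)`, evaluating `g ⊕ f` at `y⁻¹x` gives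
`d(y,x) ≤ g(y⁻¹) + f(x)`, while `(f ⊕ g)(1) = 0` provides points `y` with `f(y) + g(y⁻¹)`
arbitrarily small. These points form a Cauchy sequence, and `f = d(a,·)` at its limit `a`.
-/

/-- The inf-convolution of two real-valued functions on a group:
`(f ⊕ g)(x) = inf { f y + g z : y * z = x }`. -/
noncomputable def infConv {X : Type*} [Mul X] (f g : X → ℝ) : X → ℝ :=
  fun x => sInf {r : ℝ | ∃ y z : X, y * z = x ∧ r = f y + g z}

/-- The set `Lip¹₊(X)` of nonnegative 1-Lipschitz real-valued functions. -/
def LipOnePos (X : Type*) [MetricSpace X] : Set (X → ℝ) :=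
  {f | (∀ x, 0 ≤ f x) ∧ ∀ x y, |f x - f y| ≤ dist x y}

open Filter Topology

section

variable {X : Type*}

section InfConv

variable {f g h : X → ℝ}

theorem infConv_le_add [Mul X] (hf : ∀ x, 0 ≤ f x) (hg : ∀ x, 0 ≤ g x) {x y z : X}
    (hyz : y * z = x) : infConv f g x ≤ f y + g z :=
  csInf_le ⟨0, by rintro _ ⟨y, z, -, rfl⟩; exact add_nonneg (hf y) (hg z)⟩ ⟨y, z, hyz, rfl⟩

theorem le_infConv [MulOneClass X] {x : X} {c : ℝ} (hc : ∀ y z, y * z = x → c ≤ f y + g z) :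
    c ≤ infConv f g x :=
  le_csInf ⟨_, x, 1, mul_one x, rfl⟩ <| by rintro _ ⟨y, z, hyz, rfl⟩; exact hc y z hyz

theorem exists_add_lt_of_infConv_lt [MulOneClass X] {x : X} {c : ℝ} (hlt : infConv f g x < c) :
    ∃ y z, y * z = x ∧ f y + g z < c := by
  obtain ⟨_, ⟨y, z, hyz, rfl⟩, hlt⟩ := exists_lt_of_csInf_lt
    (s := {r | ∃ y z : X, y * z = x ∧ r = f y + g z}) ⟨_, x, 1, mul_one x, rfl⟩ hlt
  exact ⟨y, z, hyz, hlt⟩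

theorem infConv_nonneg [MulOneClass X] (hf : ∀ x, 0 ≤ f x) (hg : ∀ x, 0 ≤ g x) (x : X) :
    0 ≤ infConv f g x :=
  le_infConv fun y z _ => add_nonneg (hf y) (hg z)

theorem infConv_assoc [Monoid X] (hf : ∀ x, 0 ≤ f x)
    (hg : ∀ x, 0 ≤ g x) (hh : ∀ x, 0 ≤ h x) :
    infConv (infConv f g) h = infConv f (infConv g h) := by
  funext x
  apply le_antisymm
  · refine le_infConv fun y u hyu => ?_
    rw [← sub_le_iff_le_add']
    refine le_infConv fun z w hzw => ?_
    have h₁ := infConv_le_add (infConv_nonneg hf hg) hh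
      (show y * z * w = x by rw [mul_assoc, hzw, hyu])
    have h₂ : infConv f g (y * z) ≤ f y + g z := infConv_le_add hf hg rfl
    linarith
  · refine le_infConv fun u w huw => ?_
    rw [← sub_le_iff_le_add]
    refine le_infConv fun y z hyz => ?_
    have h₁ := infConv_le_add hf (infConv_nonneg hg hh)
      (show y * (z * w) = x by rw [← mul_assoc, hyz, huw])
    have h₂ : infConv g h (z * w) ≤ g z + h w := infConv_le_add hg hh rfl
    linarith

end InfConv

section LipOnePos

variable [MetricSpace X] {f : X → ℝ}

theorem mem_lipOnePos_iff :
    f ∈ LipOnePos X ↔ (∀ x, 0 ≤ f x) ∧ ∀ x y, f x ≤ f y + dist x y := by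
  refine and_congr_right fun _ => ⟨fun h x y => ?_, fun h x y => abs_sub_le_iff.2 ⟨?_, ?_⟩⟩
  · linarith [(abs_le.1 (h x y)).2]
  · linarith [h x y]
  · linarith [h y x, dist_comm x y]

theorem dist_mem_lipOnePos (a : X) : (fun x => dist a x) ∈ LipOnePos X :=
  mem_lipOnePos_iff.2 ⟨fun _ => dist_nonneg, fun x y => by
    linarith [dist_triangle a y x, dist_comm x y]⟩

end LipOnePos

section InvariantGroup

variable [Group X] [MetricSpace X] {f g : X → ℝ}

theorem infConv_mem_lipOnePos [IsIsometricSMul X X] (hf₀ : ∀ x, 0 ≤ f x)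
    (hg : g ∈ LipOnePos X) : infConv f g ∈ LipOnePos X := by
  obtain ⟨hg₀, hg⟩ := mem_lipOnePos_iff.1 hg
  refine mem_lipOnePos_iff.2 ⟨infConv_nonneg hf₀ hg₀, fun x x' => ?_⟩
  rw [← sub_le_iff_le_add]
  refine le_infConv fun y z hyz => ?_
  have h₁ : infConv f g x ≤ f y + g (y⁻¹ * x) := infConv_le_add hf₀ hg₀ (mul_inv_cancel_left y x)
  have h₂ : dist (y⁻¹ * x) z = dist x x' := by
    rw [← dist_mul_left y, mul_inv_cancel_left, hyz]
  linarith [hg (y⁻¹ * x) z]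

theorem infConv_dist_one_left [IsIsometricSMul Xᵐᵒᵖ X] (hf : f ∈ LipOnePos X) :
    infConv (fun x => dist (1 : X) x) f = f := by
  obtain ⟨hf₀, hf⟩ := mem_lipOnePos_iff.1 hf
  funext x
  apply le_antisymm
  · simpa using infConv_le_add (dist_mem_lipOnePos 1).1 hf₀ (one_mul x)
  · refine le_infConv fun y z hyz => ?_
    have : dist x z = dist 1 y := by rw [← hyz, ← dist_mul_right 1 y z, one_mul, dist_comm]
    linarith [hf x z]

theorem infConv_dist_one_right [IsIsometricSMul X X] (hf : f ∈ LipOnePos X) :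
    infConv f (fun x => dist (1 : X) x) = f := by
  obtain ⟨hf₀, hf⟩ := mem_lipOnePos_iff.1 hf
  funext x
  apply le_antisymm
  · simpa using infConv_le_add hf₀ (dist_mem_lipOnePos 1).1 (mul_one x)
  · refine le_infConv fun y z hyz => ?_
    have : dist x y = dist 1 z := by rw [← hyz, dist_comm, ← dist_mul_left y 1 z, mul_one]
    linarith [hf x y]

theorem infConv_dist_dist [IsIsometricSMul X X] [IsIsometricSMul Xᵐᵒᵖ X] (a b : X) :
    infConv (fun x => dist a x) (fun x => dist b x) = fun x => dist (a * b) x := by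
  funext x
  apply le_antisymm
  · calc infConv _ _ x ≤ dist a a + dist b (a⁻¹ * x) :=
          infConv_le_add (dist_mem_lipOnePos a).1 (dist_mem_lipOnePos b).1 (mul_inv_cancel_left a x)
      _ = dist (a * b) x := by rw [dist_self, zero_add, ← dist_mul_left a, mul_inv_cancel_left]
  · refine le_infConv fun y z hyz => ?_
    calc dist (a * b) x ≤ dist (a * b) (y * b) + dist (y * b) (y * z) := by
          rw [← hyz]; exact dist_triangle _ _ _
      _ = dist a y + dist b z := by rw [dist_mul_right, dist_mul_left]

end InvariantGroup

theorem exists_eq_dist_of_dist_le_add [PseudoMetricSpace X] [CompleteSpace X] {f h : X → ℝ}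
    (hf₀ : ∀ x, 0 ≤ f x) (hh₀ : ∀ x, 0 ≤ h x) (hf : ∀ x y, f x ≤ f y + dist x y)
    (hdist : ∀ x y, dist x y ≤ h x + f y) (hinf : ∀ ε > 0, ∃ x, f x + h x < ε) :
    ∃ a, f = fun x => dist a x := by
  choose u hu using fun n : ℕ => hinf (1 / (n + 1)) Nat.one_div_pos_of_nat
  have hfu : Tendsto (fun n => f (u n)) atTop (𝓝 0) :=
    squeeze_zero (fun n => hf₀ _) (fun n => by linarith [hh₀ (u n), hu n])
      tendsto_one_div_add_atTop_nhds_zero_nat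
  have hhu : Tendsto (fun n => h (u n)) atTop (𝓝 0) :=
    squeeze_zero (fun n => hh₀ _) (fun n => by linarith [hf₀ (u n), hu n])
      tendsto_one_div_add_atTop_nhds_zero_nat
  have hcauchy : CauchySeq u := by
    refine Metric.cauchySeq_iff'.2 fun ε hε => ?_
    obtain ⟨N, hN⟩ := eventually_atTop.1 <|
      (hhu.eventually (gt_mem_nhds (half_pos hε))).and (hfu.eventually (gt_mem_nhds (half_pos hε)))
    exact ⟨N, fun n hn => by linarith [hdist (u n) (u N), (hN n hn).1, (hN N le_rfl).2]⟩
  obtain ⟨a, ha⟩ := cauchySeq_tendsto_of_complete hcauchy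
  refine ⟨a, funext fun x => le_antisymm ?_ ?_⟩
  · have := le_of_tendsto_of_tendsto' tendsto_const_nhds
      (hfu.add (tendsto_const_nhds.dist ha)) fun n => hf x (u n)
    rwa [zero_add, dist_comm] at this
  · have := le_of_tendsto_of_tendsto' (ha.dist tendsto_const_nhds)
      (hhu.add_const (f x)) fun n => hdist (u n) x
    rwa [zero_add] at this

theorem exists_eq_dist_of_infConv_eq_dist_one [Group X] [MetricSpace X] [CompleteSpace X]
    [IsIsometricSMul X X] {f g : X → ℝ} (hf : f ∈ LipOnePos X) (hg : ∀ x, 0 ≤ g x)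
    (hfg : infConv f g = fun x => dist (1 : X) x) (hgf : infConv g f = fun x => dist (1 : X) x) :
    ∃ a, f = fun x => dist a x := by
  obtain ⟨hf₀, hf⟩ := mem_lipOnePos_iff.1 hf
  refine exists_eq_dist_of_dist_le_add hf₀ (fun x => hg x⁻¹) hf (fun x y => ?_) fun ε hε => ?_
  · calc dist x y = dist 1 (x⁻¹ * y) := by rw [← dist_mul_left x 1, mul_one, mul_inv_cancel_left]
      _ = infConv g f (x⁻¹ * y) := by rw [hgf]
      _ ≤ g x⁻¹ + f y := infConv_le_add hg hf₀ rfl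
  · have : infConv f g 1 < ε := by rw [hfg]; simpa using hε
    obtain ⟨x, y, hxy, hlt⟩ := exists_add_lt_of_infConv_lt this
    exact ⟨x, by rwa [← eq_inv_of_mul_eq_one_right hxy]⟩

end

/-- on a complete metric invariant group, `(Lip¹₊(X), ⊕)` is a monoid with
identity `γ(1) = d(1,·)`, and `f ∈ Lip¹₊(X)` is invertible in this monoid iff
`f = d(a,·)` for some `a ∈ X`. -/
theorem lipOnePos_monoid_units {X : Type*} [Group X] [MetricSpace X] [CompleteSpace X]
    (hleft : ∀ x y z : X, dist (x * y) (x * z) = dist y z)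
    (hright : ∀ x y z : X, dist (y * x) (z * x) = dist y z) :
    (∀ f ∈ LipOnePos X, ∀ g ∈ LipOnePos X, infConv f g ∈ LipOnePos X) ∧
    (∀ f ∈ LipOnePos X, ∀ g ∈ LipOnePos X, ∀ h ∈ LipOnePos X,
       infConv (infConv f g) h = infConv f (infConv g h)) ∧
    (∀ f ∈ LipOnePos X,
       infConv (fun x => dist (1 : X) x) f = f ∧ infConv f (fun x => dist (1 : X) x) = f) ∧
    (∀ f ∈ LipOnePos X,
       (∃ g ∈ LipOnePos X, infConv f g = (fun x => dist (1 : X) x) ∧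
          infConv g f = (fun x => dist (1 : X) x)) ↔
       ∃ a : X, f = fun x => dist a x) := by
  have : IsIsometricSMul X X := ⟨fun c => Isometry.of_dist_eq (hleft c)⟩
  have : IsIsometricSMul Xᵐᵒᵖ X := ⟨fun c => Isometry.of_dist_eq (hright c.unop)⟩
  refine ⟨fun f hf g hg => infConv_mem_lipOnePos hf.1 hg,
    fun f hf g hg h hh => infConv_assoc hf.1 hg.1 hh.1,
    fun f hf => ⟨infConv_dist_one_left hf, infConv_dist_one_right hf⟩,
    fun f hf => ⟨?_, ?_⟩⟩
  · rintro ⟨g, hg, hfg, hgf⟩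
    exact exists_eq_dist_of_infConv_eq_dist_one hf hg.1 hfg hgf
  · rintro ⟨a, rfl⟩
    refine ⟨fun x => dist a⁻¹ x, dist_mem_lipOnePos a⁻¹, ?_, ?_⟩
    · rw [infConv_dist_dist, mul_inv_cancel]
    · rw [infConv_dist_dist, inv_mul_cancel]
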